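/- arXiv:2002.11758 — 4 statements merged into one kernel-verified Lean document; each statement's English description precedes it below -/
import Mathlib

section
/- For any τ, B > 0 there is a constant C depending only on τ and B such that for all positive integers Q, N and all D > 0, the number of integers 1 ≤ k ≤ N whose count of positive divisors smaller than Q exceeds D is at most C · D^{-B} · Q^{τ} · N. -/
/-!
Counting `t ∈ [1, Q]^m` together with `k ≤ N` such that `lcm t ∣ k` shows that the `m`-th moment
`∑_{k ≤ N} d(k, Q)^m` is at most `N ∑_t 1 / lcm t`. The tuples with `lcm t = l` are tuples of
divisors of `l ≤ Q^m`, so there are at most `d(l)^m` of them; with the divisor bound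
`d(l) ≪_δ l^δ` and `∑_{l ≤ Q^m} 1/l ≪ log Q`, the moment is `≪ Q^τ N`. Markov's inequality with
`m = ⌈B⌉` then gives the bound for `D ≥ 1`, and for `D < 1` it is trivial.
-/

open Finset Real

section DivisorBound

variable {δ : ℝ}

lemma succ_le_rpow_of_two_le_rpow {p : ℕ} (hp : 2 ≤ (p : ℝ) ^ δ) (a : ℕ) :
    (a + 1 : ℝ) ≤ ((p : ℝ) ^ a) ^ δ := by
  rw [← rpow_natCast_mul p.cast_nonneg, mul_comm, rpow_mul_natCast p.cast_nonneg]
  calc (a + 1 : ℝ) ≤ 2 ^ a := by exact_mod_cast Nat.lt_two_pow_self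
    _ ≤ ((p : ℝ) ^ δ) ^ a := by gcongr

lemma succ_le_mul_rpow (hδ : 0 < δ) {p : ℕ} (hp : 2 ≤ p) (a : ℕ) :
    (a + 1 : ℝ) ≤ (1 + (δ * log 2)⁻¹) * ((p : ℝ) ^ a) ^ δ := by
  set c := δ * log 2
  have hc : 0 < c := mul_pos hδ (log_pos one_lt_two)
  have hexp : 1 + a * c ≤ ((p : ℝ) ^ a) ^ δ :=
    calc 1 + a * c ≤ exp (a * c) := by linarith [add_one_le_exp (a * c)]
      _ = ((2 : ℝ) ^ a) ^ δ := by
        rw [← rpow_natCast_mul zero_le_two, rpow_def_of_pos zero_lt_two]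
        congr 1
        simp only [c]
        ring
      _ ≤ ((p : ℝ) ^ a) ^ δ := by gcongr; exact_mod_cast hp
  have hexpand : (1 + c⁻¹) * (1 + a * c) = a + 1 + (a * c + c⁻¹) := by field_simp; ring
  calc (a + 1 : ℝ) ≤ (1 + c⁻¹) * (1 + a * c) := by
        have : 0 ≤ a * c + c⁻¹ := by positivity
        linarith
    _ ≤ _ := by gcongr

/-- Each prime power `p^a ∥ n` contributes a factor `(a + 1) / p^(aδ)`, which is at most `1` once
`p ≥ 2^(1/δ)` and at most `1 + 1 / (δ log 2)` in any case. -/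
theorem card_divisors_le_mul_rpow (hδ : 0 < δ) :
    ∃ C : ℝ, ∀ n : ℕ, n ≠ 0 → (#n.divisors : ℝ) ≤ C * (n : ℝ) ^ δ := by
  set K := 1 + (δ * log 2)⁻¹
  have hK : 1 ≤ K := le_add_of_nonneg_right (by positivity)
  set P := ⌈(2 : ℝ) ^ δ⁻¹⌉₊
  refine ⟨K ^ P, fun n hn => ?_⟩
  have hprime : ∀ p ∈ n.primeFactors, (n.factorization p + 1 : ℝ) ≤
      (if p < P then K else 1) * ((p : ℝ) ^ n.factorization p) ^ δ := by
    intro p hp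
    split_ifs with hpP
    · exact succ_le_mul_rpow hδ (Nat.prime_of_mem_primeFactors hp).two_le _
    · rw [one_mul]
      refine succ_le_rpow_of_two_le_rpow ?_ _
      calc (2 : ℝ) = ((2 : ℝ) ^ δ⁻¹) ^ δ := by
            rw [← rpow_mul zero_le_two, inv_mul_cancel₀ hδ.ne', rpow_one]
        _ ≤ (p : ℝ) ^ δ := by gcongr; exact (Nat.le_ceil _).trans (by exact_mod_cast not_lt.mp hpP)
  have hsmall : #{p ∈ n.primeFactors | p < P} ≤ P :=
    (card_le_card fun p hp => mem_range.mpr (mem_filter.mp hp).2).trans (card_range P).le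
  calc (#n.divisors : ℝ) = ∏ p ∈ n.primeFactors, (n.factorization p + 1 : ℝ) := by
        rw [Nat.card_divisors hn]; push_cast; rfl
    _ ≤ ∏ p ∈ n.primeFactors, (if p < P then K else 1) * ((p : ℝ) ^ n.factorization p) ^ δ :=
        prod_le_prod (fun _ _ => by positivity) hprime
    _ = K ^ #{p ∈ n.primeFactors | p < P} * (n : ℝ) ^ δ := by
        rw [prod_mul_distrib, prod_ite, prod_const_one, mul_one, prod_const,
          finsetProd_rpow _ _ (fun _ _ => by positivity)]
        congr
        conv_rhs => rw [← Nat.prod_factorization_pow_eq_self hn]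
        rw [Nat.prod_factorization_eq_prod_primeFactors]
        push_cast
        rfl
    _ ≤ K ^ P * (n : ℝ) ^ δ := by gcongr

end DivisorBound

lemma pow_card_filter_divisors_le_eq {k : ℕ} (hk : k ≠ 0) (Q m : ℕ) :
    #{q ∈ k.divisors | q ≤ Q} ^ m =
      #{t ∈ Fintype.piFinset fun _ : Fin m => Icc 1 Q | univ.lcm t ∣ k} := by
  rw [← Fintype.card_piFinset_const]
  congr 1
  ext t
  simp only [Fintype.mem_piFinset, mem_filter, Nat.mem_divisors, mem_Icc, Finset.lcm_dvd_iff,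
    mem_univ, true_implies]
  exact ⟨fun h => ⟨fun i => ⟨Nat.pos_of_dvd_of_pos (h i).1.1 (Nat.pos_of_ne_zero hk), (h i).2⟩,
    fun i => (h i).1.1⟩, fun h i => ⟨⟨h.2 i, hk⟩, (h.1 i).2⟩⟩

lemma sum_pow_card_filter_divisors_le_eq (Q N m : ℕ) :
    ∑ k ∈ Icc 1 N, #{q ∈ k.divisors | q ≤ Q} ^ m =
      ∑ t ∈ Fintype.piFinset (fun _ : Fin m => Icc 1 Q), N / univ.lcm t := by
  rw [sum_congr rfl fun k hk => pow_card_filter_divisors_le_eq (by grind) Q m]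
  simp_rw [card_filter]
  rw [sum_comm]
  refine sum_congr rfl fun t _ => ?_
  rw [← card_filter, ← Nat.Ioc_filter_dvd_card_eq_div, ← Icc_add_one_left_eq_Ioc, zero_add]

lemma lcm_mem_Icc_of_mem_piFinset {Q m : ℕ} {t : Fin m → ℕ}
    (ht : t ∈ Fintype.piFinset fun _ => Icc 1 Q) : univ.lcm t ∈ Icc 1 (Q ^ m) := by
  simp only [Fintype.mem_piFinset, mem_Icc] at ht
  have hprod : 0 < ∏ i, t i := prod_pos fun i _ => (ht i).1
  have hdvd : univ.lcm t ∣ ∏ i, t i := Finset.lcm_dvd fun i _ => dvd_prod_of_mem t (mem_univ i)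
  refine mem_Icc.mpr ⟨Nat.pos_of_dvd_of_pos hdvd hprod, (Nat.le_of_dvd hprod hdvd).trans ?_⟩
  simpa using prod_le_pow_card univ t Q fun i _ => (ht i).2

lemma card_filter_lcm_eq_le {m : ℕ} (T : Finset (Fin m → ℕ)) {l : ℕ} (hl : l ≠ 0) :
    #{t ∈ T | univ.lcm t = l} ≤ #l.divisors ^ m := by
  rw [← Fintype.card_piFinset_const]
  refine card_le_card fun t ht => Fintype.mem_piFinset.mpr fun i => ?_
  rw [mem_filter] at ht
  exact Nat.mem_divisors.mpr ⟨ht.2 ▸ Finset.dvd_lcm (mem_univ i), hl⟩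

lemma sum_inv_lcm_le (Q m : ℕ) :
    ∑ t ∈ Fintype.piFinset (fun _ : Fin m => Icc 1 Q), ((univ.lcm t : ℕ) : ℝ)⁻¹ ≤
      ∑ l ∈ Icc 1 (Q ^ m), (#l.divisors : ℝ) ^ m / l := by
  rw [← sum_fiberwise_of_maps_to fun t ht => lcm_mem_Icc_of_mem_piFinset ht]
  refine sum_le_sum fun l hl => ?_
  rw [sum_congr rfl fun t ht => by rw [(mem_filter.mp ht).2], sum_const, nsmul_eq_mul,
    div_eq_mul_inv]
  gcongr
  exact_mod_cast card_filter_lcm_eq_le _ (by grind)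

theorem sum_pow_card_filter_divisors_le (Q N m : ℕ) :
    ∑ k ∈ Icc 1 N, (#{q ∈ k.divisors | q ≤ Q} : ℝ) ^ m ≤
      N * ∑ l ∈ Icc 1 (Q ^ m), (#l.divisors : ℝ) ^ m / l := by
  calc ∑ k ∈ Icc 1 N, (#{q ∈ k.divisors | q ≤ Q} : ℝ) ^ m
      = ∑ t ∈ Fintype.piFinset (fun _ : Fin m => Icc 1 Q), ((N / univ.lcm t : ℕ) : ℝ) := by
        exact_mod_cast sum_pow_card_filter_divisors_le_eq Q N m
    _ ≤ ∑ t ∈ Fintype.piFinset (fun _ : Fin m => Icc 1 Q), N * ((univ.lcm t : ℕ) : ℝ)⁻¹ :=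
        sum_le_sum fun t _ => Nat.cast_div_le.trans_eq (div_eq_mul_inv _ _)
    _ ≤ _ := by rw [← mul_sum]; gcongr; exact sum_inv_lcm_le Q m

lemma sum_Icc_pow_inv_le {ε : ℝ} (hε : 0 < ε) {Q : ℕ} (hQ : 0 < Q) (m : ℕ) :
    ∑ l ∈ Icc 1 (Q ^ m), (l : ℝ)⁻¹ ≤ (1 + m / ε) * (Q : ℝ) ^ ε := by
  have hQε : 1 ≤ (Q : ℝ) ^ ε := one_le_rpow (by exact_mod_cast hQ) hε.le
  calc ∑ l ∈ Icc 1 (Q ^ m), (l : ℝ)⁻¹ = harmonic (Q ^ m) := by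
        rw [harmonic_eq_sum_Icc]; push_cast; rfl
    _ ≤ 1 + m * log Q := by simpa using harmonic_le_one_add_log (Q ^ m)
    _ ≤ 1 + m * ((Q : ℝ) ^ ε / ε) := by gcongr; exact log_le_rpow_div Q.cast_nonneg hε
    _ ≤ (1 + m / ε) * (Q : ℝ) ^ ε := by
        rw [add_mul, one_mul, mul_div_assoc', div_mul_eq_mul_div]; gcongr

theorem exists_sum_pow_card_divisors_div_le (m : ℕ) {τ : ℝ} (hτ : 0 < τ) :
    ∃ C : ℝ, ∀ Q : ℕ, 0 < Q →
      ∑ l ∈ Icc 1 (Q ^ m), (#l.divisors : ℝ) ^ m / l ≤ C * (Q : ℝ) ^ τ := by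
  set ε := τ / 2
  have hε : 0 < ε := half_pos hτ
  set δ := ε / (m ^ 2 + 1)
  obtain ⟨A, hA⟩ := card_divisors_le_mul_rpow (show 0 < δ by positivity)
  have hA0 : 0 ≤ A := zero_le_one.trans (by simpa using hA 1 one_ne_zero)
  have hδm : (m : ℝ) * δ * m ≤ ε := by
    rw [show (m : ℝ) * δ * m = ε * (m ^ 2 / (m ^ 2 + 1)) by ring]
    exact mul_le_of_le_one_right hε.le (div_le_one_of_le₀ (by linarith) (by positivity))
  refine ⟨A ^ m * (1 + m / ε), fun Q hQ => ?_⟩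
  have hQ1 : (1 : ℝ) ≤ Q := by exact_mod_cast hQ
  have hterm : ∀ l ∈ Icc 1 (Q ^ m), (#l.divisors : ℝ) ^ m ≤ A ^ m * (Q : ℝ) ^ ε := by
    intro l hl
    have hlQ : (l : ℝ) ≤ (Q : ℝ) ^ m := by exact_mod_cast (mem_Icc.mp hl).2
    calc (#l.divisors : ℝ) ^ m ≤ (A * (l : ℝ) ^ δ) ^ m := by gcongr; exact hA l (by grind)
      _ ≤ (A * ((Q : ℝ) ^ m) ^ δ) ^ m := by gcongr
      _ = A ^ m * (Q : ℝ) ^ ((m : ℝ) * δ * m) := by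
        rw [mul_pow, ← rpow_natCast_mul Q.cast_nonneg, ← rpow_mul_natCast Q.cast_nonneg]
      _ ≤ A ^ m * (Q : ℝ) ^ ε := by gcongr
  calc ∑ l ∈ Icc 1 (Q ^ m), (#l.divisors : ℝ) ^ m / l
      ≤ ∑ l ∈ Icc 1 (Q ^ m), A ^ m * (Q : ℝ) ^ ε * (l : ℝ)⁻¹ := by
        gcongr with l hl; rw [div_eq_mul_inv]; gcongr; exact hterm l hl
    _ ≤ A ^ m * (Q : ℝ) ^ ε * ((1 + m / ε) * (Q : ℝ) ^ ε) := by
        rw [← mul_sum]; gcongr; exact sum_Icc_pow_inv_le hε hQ m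
    _ = A ^ m * (1 + m / ε) * (Q : ℝ) ^ τ := by
        rw [show τ = ε + ε by ring, rpow_add (by positivity)]; ring

theorem exists_sum_pow_card_filter_divisors_le (m : ℕ) {τ : ℝ} (hτ : 0 < τ) :
    ∃ C : ℝ, ∀ Q N : ℕ, 0 < Q →
      ∑ k ∈ Icc 1 N, (#{q ∈ k.divisors | q ≤ Q} : ℝ) ^ m ≤ C * (Q : ℝ) ^ τ * N := by
  obtain ⟨C, hC⟩ := exists_sum_pow_card_divisors_div_le m hτ
  refine ⟨C, fun Q N hQ => (sum_pow_card_filter_divisors_le Q N m).trans ?_⟩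
  rw [mul_comm _ (N : ℝ)]
  gcongr
  exact hC Q hQ

lemma card_filter_lt_mul_pow_le_sum_pow {ι : Type*} (s : Finset ι) {f : ι → ℝ}
    (hf : ∀ i ∈ s, 0 ≤ f i) {D : ℝ} (hD : 0 ≤ D) (m : ℕ) :
    #{i ∈ s | D < f i} * D ^ m ≤ ∑ i ∈ s, f i ^ m := by
  calc #{i ∈ s | D < f i} * D ^ m ≤ ∑ i ∈ s with D < f i, f i ^ m := by
        rw [← nsmul_eq_mul]
        exact card_nsmul_le_sum _ _ _ fun i hi => by gcongr; exact (mem_filter.mp hi).2.le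
    _ ≤ ∑ i ∈ s, f i ^ m :=
        sum_le_sum_of_subset_of_nonneg (filter_subset _ _) fun i hi _ => pow_nonneg (hf i hi) m

/-- For any τ, B > 0 there is a constant C = C(τ,B) such that for all positive
integers Q, N and all D > 0, the number of integers 1 ≤ k ≤ N whose number of
positive divisors that are at most Q exceeds D is at most C · D^(−B) · Q^τ · N. -/
theorem divisor_level_set_bound (τ B : ℝ) (hτ : 0 < τ) (hB : 0 < B) :
    ∃ C : ℝ, 0 < C ∧ ∀ (Q N : ℕ), 0 < Q → 0 < N → ∀ D : ℝ, 0 < D →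
      (((Finset.Icc 1 N).filter fun k =>
          D < (((Nat.divisors k).filter fun q => q ≤ Q).card : ℝ)).card : ℝ)
        ≤ C * D ^ (-B) * (Q : ℝ) ^ τ * (N : ℝ) := by
  obtain ⟨C, hC⟩ := exists_sum_pow_card_filter_divisors_le ⌈B⌉₊ hτ
  refine ⟨max C 1, by positivity, fun Q N hQ _ D hD => ?_⟩
  have hQτ : 1 ≤ (Q : ℝ) ^ τ := one_le_rpow (by exact_mod_cast hQ) hτ.le
  rcases le_or_gt 1 D with hD1 | hD1
  · have hmoment := (card_filter_lt_mul_pow_le_sum_pow (Icc 1 N) (fun _ _ => Nat.cast_nonneg _)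
      hD.le ⌈B⌉₊).trans (hC Q N hQ)
    have hDB : D ^ (-(⌈B⌉₊ : ℝ)) ≤ D ^ (-B) :=
      rpow_le_rpow_of_exponent_le hD1 (neg_le_neg (Nat.le_ceil B))
    rw [← le_div_iff₀ (by positivity), div_eq_mul_inv, ← rpow_natCast, ← rpow_neg hD.le]
      at hmoment
    calc _ ≤ C * (Q : ℝ) ^ τ * N * D ^ (-(⌈B⌉₊ : ℝ)) := hmoment
      _ = C * D ^ (-(⌈B⌉₊ : ℝ)) * (Q : ℝ) ^ τ * N := by ring
      _ ≤ max C 1 * D ^ (-B) * (Q : ℝ) ^ τ * N := by gcongr; exact le_max_left C 1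
  · have hDB : 1 ≤ D ^ (-B) := one_le_rpow_of_pos_of_le_one_of_nonpos hD hD1.le (by linarith)
    calc _ ≤ (#(Icc 1 N) : ℝ) := by exact_mod_cast card_filter_le _ _
      _ = 1 * 1 * 1 * N := by simp
      _ ≤ max C 1 * D ^ (-B) * (Q : ℝ) ^ τ * N := by gcongr; exact le_max_right C 1
end

section
/- Let f ∈ ℓ^p(ℤ^n) and h ∈ ℤ^n, and define f_h(x) = f(x) + f(x+h). Then lim_{‖h‖→∞} ‖f_h‖_{ℓ^p(ℤ^n)} = 2^{1/p} ‖f‖_{ℓ^p(ℤ^n)} for 1 ≤ p < ∞. -/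
/-!
For finitely supported `g`, the supports of `g` and `g (· + h)` are disjoint as soon as `h`
avoids the finite set `-supp g + supp g`, and then `‖g + g (· + h)‖ₚᵖ = 2 ‖g‖ₚᵖ` exactly.
Since translation is an isometry of `ℓᵖ` and `2 ^ (1 / p) ≤ 2`, both `‖f + f (· + h)‖ₚ` and
`2 ^ (1 / p) ‖f‖ₚ` move by at most `2 ‖f - g‖ₚ` when `f` is replaced by `g`, uniformly in `h`;
approximating `f` by finitely supported functions gives the limit.
-/

open MeasureTheory ENNReal Filter Function

open Pointwise in
theorem Set.Finite.eventually_cofinite_disjoint_preimage_add_right {G : Type*} [AddGroup G]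
    {s : Set G} (hs : s.Finite) : ∀ᶠ h in cofinite, Disjoint s ((· + h) ⁻¹' s) := by
  filter_upwards [(hs.neg.add hs).compl_mem_cofinite] with h hh
  exact Set.disjoint_left.2 fun x hx hxh =>
    hh ⟨-x, neg_mem_neg.2 hx, x + h, hxh, neg_add_cancel_left x h⟩

theorem ENNReal.tendsto_nhds_of_forall_eventually_near {ι : Type*} {l : Filter ι}
    {u : ι → ℝ≥0∞} {a : ℝ≥0∞}
    (h : ∀ ε > 0, ∃ b, (a ≤ b + ε ∧ b ≤ a + ε) ∧ ∀ᶠ i in l, u i ≤ b + ε ∧ b ≤ u i + ε) :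
    Tendsto u l (nhds a) := by
  refine ENNReal.tendsto_nhds_of_Icc fun ε hε => ?_
  obtain ⟨b, ⟨hab, hba⟩, hub⟩ := h (ε / 2) (ENNReal.half_pos hε.ne')
  filter_upwards [hub] with i ⟨hu, hb⟩
  constructor
  · rw [tsub_le_iff_right, ← ENNReal.add_halves ε, ← add_assoc]
    exact hab.trans (add_le_add_left hb _)
  · rw [← ENNReal.add_halves ε, ← add_assoc]
    exact hu.trans (add_le_add_left hba _)

namespace MeasureTheory

section General

variable {α E : Type*} [MeasurableSpace α] [NormedAddCommGroup E] {p : ℝ≥0∞} {μ : Measure α}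
  {f g : α → E}

theorem eLpNorm_le_eLpNorm_add_eLpNorm_sub (hp : 1 ≤ p) (hf : AEStronglyMeasurable f μ)
    (hg : AEStronglyMeasurable g μ) :
    eLpNorm f p μ ≤ eLpNorm g p μ + eLpNorm (f - g) p μ := by
  simpa using eLpNorm_add_le hg (hf.sub hg) hp

theorem mul_eLpNorm_le_add_of_two_mul_eLpNorm_sub_le (hp : 1 ≤ p)
    (hf : AEStronglyMeasurable f μ) (hg : AEStronglyMeasurable g μ) {c ε : ℝ≥0∞} (hc : c ≤ 2)
    (hfg : 2 * eLpNorm (f - g) p μ ≤ ε) :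
    c * eLpNorm f p μ ≤ c * eLpNorm g p μ + ε :=
  calc c * eLpNorm f p μ ≤ c * (eLpNorm g p μ + eLpNorm (f - g) p μ) := by
        gcongr; exact eLpNorm_le_eLpNorm_add_eLpNorm_sub hp hf hg
    _ ≤ c * eLpNorm g p μ + 2 * eLpNorm (f - g) p μ := by rw [mul_add]; gcongr
    _ ≤ c * eLpNorm g p μ + ε := by gcongr

theorem eLpNorm_add_rpow_of_disjoint_support (hp0 : p ≠ 0) (hp : p ≠ ∞)
    (hf : AEStronglyMeasurable f μ) (hd : Disjoint (support f) (support g)) :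
    eLpNorm (f + g) p μ ^ p.toReal = eLpNorm f p μ ^ p.toReal + eLpNorm g p μ ^ p.toReal := by
  have hq : 0 < p.toReal := ENNReal.toReal_pos hp0 hp
  simp only [eLpNorm_eq_lintegral_rpow_enorm_toReal hp0 hp, ← ENNReal.rpow_mul,
    one_div_mul_cancel hq.ne', ENNReal.rpow_one]
  rw [← lintegral_add_left' (hf.enorm.pow_const _)]
  congr 1 with x
  by_cases hfx : f x = 0
  · simp [hfx, ENNReal.zero_rpow_of_pos hq]
  · have hgx : g x = 0 := notMem_support.1 (Set.disjoint_left.1 hd hfx)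
    simp [hgx, ENNReal.zero_rpow_of_pos hq]

theorem MemLp.exists_finite_support_eLpNorm_sub_lt [MeasurableSingletonClass α]
    (hf : MemLp f p Measure.count) (hp : p ≠ ∞) {δ : ℝ≥0∞} (hδ : δ ≠ 0) :
    ∃ g : α → E, (support g).Finite ∧ eLpNorm (f - g) p Measure.count < δ :=
  let ⟨s, _, hs, hfs⟩ := hf.exists_eLpNorm_indicator_compl_lt hp hδ
  ⟨s.indicator f, (Measure.count_apply_lt_top.1 hs).subset Set.support_indicator_subset,
    s.indicator_compl f ▸ hfs⟩

end General

section Translation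

variable {G E : Type*} [AddGroup G] [MeasurableSpace G] [MeasurableAdd G] [NormedAddCommGroup E]
  {p : ℝ≥0∞} {μ : Measure G} [μ.IsAddRightInvariant] {f g : G → E}

theorem eLpNorm_comp_add_right (hg : AEStronglyMeasurable g μ) (h : G) :
    eLpNorm (fun x => g (x + h)) p μ = eLpNorm g p μ :=
  eLpNorm_comp_measurePreserving hg (measurePreserving_add_right μ h)

theorem eLpNorm_add_comp_add_right_of_disjoint (hp0 : p ≠ 0) (hp : p ≠ ∞)
    (hg : AEStronglyMeasurable g μ) {h : G}
    (hd : Disjoint (support g) (support fun x => g (x + h))) :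
    eLpNorm (fun x => g x + g (x + h)) p μ = 2 ^ (1 / p.toReal) * eLpNorm g p μ := by
  have hq : p.toReal ≠ 0 := (ENNReal.toReal_pos hp0 hp).ne'
  have hpow := eLpNorm_add_rpow_of_disjoint_support hp0 hp hg hd
  rw [eLpNorm_comp_add_right hg, ← two_mul] at hpow
  rw [← ENNReal.rpow_rpow_inv hq (eLpNorm _ p μ), ← Pi.add_def, hpow,
    ENNReal.mul_rpow_of_nonneg _ _ (inv_nonneg.2 ENNReal.toReal_nonneg),
    ENNReal.rpow_rpow_inv hq, one_div]

theorem eLpNorm_add_comp_add_right_le (hp : 1 ≤ p) (hf : AEStronglyMeasurable f μ)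
    (hg : AEStronglyMeasurable g μ) (h : G) :
    eLpNorm (fun x => f x + f (x + h)) p μ
      ≤ eLpNorm (fun x => g x + g (x + h)) p μ + 2 * eLpNorm (f - g) p μ := by
  have hfg := hf.sub hg
  have hτ : AEStronglyMeasurable (fun x => (f - g) (x + h)) μ :=
    hfg.comp_measurePreserving (measurePreserving_add_right μ h)
  calc eLpNorm (fun x => f x + f (x + h)) p μ
      = eLpNorm ((fun x => g x + g (x + h)) + fun x => (f - g) x + (f - g) (x + h)) p μ := by
        congr 1 with x; simp only [Pi.add_apply, Pi.sub_apply]; abel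
    _ ≤ eLpNorm (fun x => g x + g (x + h)) p μ
          + eLpNorm (fun x => (f - g) x + (f - g) (x + h)) p μ :=
        eLpNorm_add_le (hg.add (hg.comp_measurePreserving (measurePreserving_add_right μ h)))
          (hfg.add hτ) hp
    _ ≤ eLpNorm (fun x => g x + g (x + h)) p μ
          + (eLpNorm (f - g) p μ + eLpNorm (fun x => (f - g) (x + h)) p μ) := by
        gcongr
        exact eLpNorm_add_le hfg hτ hp
    _ = eLpNorm (fun x => g x + g (x + h)) p μ + 2 * eLpNorm (f - g) p μ := by
        rw [eLpNorm_comp_add_right hfg, two_mul]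

end Translation

theorem eventually_eLpNorm_add_comp_add_right_near {G E : Type*} [AddGroup G] [Countable G]
    [MeasurableSpace G] [MeasurableSingletonClass G] [NormedAddCommGroup E] {p : ℝ≥0∞}
    (hp1 : 1 ≤ p) (hp2 : p ≠ ∞) {f g : G → E} (hg : (support g).Finite) {ε : ℝ≥0∞}
    (hfg : 2 * eLpNorm (f - g) p Measure.count ≤ ε) :
    ∀ᶠ h in cofinite,
      eLpNorm (fun x => f x + f (x + h)) p Measure.count
          ≤ 2 ^ (1 / p.toReal) * eLpNorm g p Measure.count + ε ∧
        2 ^ (1 / p.toReal) * eLpNorm g p Measure.count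
          ≤ eLpNorm (fun x => f x + f (x + h)) p Measure.count + ε := by
  have hgf : 2 * eLpNorm (g - f) p Measure.count ≤ ε := eLpNorm_sub_comm f g p _ ▸ hfg
  filter_upwards [hg.eventually_cofinite_disjoint_preimage_add_right] with h hh
  rw [← eLpNorm_add_comp_add_right_of_disjoint (zero_lt_one.trans_le hp1).ne' hp2 .of_discrete hh]
  exact ⟨(eLpNorm_add_comp_add_right_le hp1 .of_discrete .of_discrete h).trans (by gcongr),
    (eLpNorm_add_comp_add_right_le hp1 .of_discrete .of_discrete h).trans (by gcongr)⟩

end MeasureTheory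

/-- For f ∈ ℓ^p(ℤⁿ), 1 ≤ p < ∞, and f_h(x) = f(x) + f(x+h), one has
‖f_h‖_{ℓ^p} → 2^{1/p} ‖f‖_{ℓ^p} as ‖h‖ → ∞ (i.e. along the cofinite filter on ℤⁿ). -/
theorem translate_sum_lp_limit (n : ℕ) (p : ℝ≥0∞) (hp1 : 1 ≤ p) (hp2 : p ≠ ∞)
    (f : (Fin n → ℤ) → ℂ) (hf : MemLp f p Measure.count) :
    Tendsto (fun h : Fin n → ℤ =>
        eLpNorm (fun x => f x + f (x + h)) p Measure.count)
      cofinite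
      (nhds ((2 : ℝ≥0∞) ^ (1 / p.toReal) * eLpNorm f p Measure.count)) := by
  have hc : (2 : ℝ≥0∞) ^ (1 / p.toReal) ≤ 2 := by
    refine (ENNReal.rpow_le_rpow_of_exponent_le one_le_two ?_).trans_eq (ENNReal.rpow_one 2)
    rw [div_le_one (ENNReal.toReal_pos (zero_lt_one.trans_le hp1).ne' hp2), ← ENNReal.toReal_one]
    exact ENNReal.toReal_mono hp2 hp1
  refine ENNReal.tendsto_nhds_of_forall_eventually_near fun ε hε => ?_
  obtain ⟨g, hg, hlt⟩ := hf.exists_finite_support_eLpNorm_sub_lt hp2 (ENNReal.half_pos hε.ne').ne'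
  have hfg : 2 * eLpNorm (f - g) p Measure.count ≤ ε :=
    calc 2 * eLpNorm (f - g) p Measure.count ≤ 2 * (ε / 2) := by gcongr
      _ = ε := ENNReal.mul_div_cancel two_ne_zero ofNat_ne_top
  have hgf : 2 * eLpNorm (g - f) p Measure.count ≤ ε := eLpNorm_sub_comm f g p _ ▸ hfg
  exact ⟨2 ^ (1 / p.toReal) * eLpNorm g p Measure.count,
    ⟨mul_eLpNorm_le_add_of_two_mul_eLpNorm_sub_le hp1 .of_discrete .of_discrete hc hfg,
      mul_eLpNorm_le_add_of_two_mul_eLpNorm_sub_le hp1 .of_discrete .of_discrete hc hgf⟩,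
    eventually_eLpNorm_add_comp_add_right_near hp1 hp2 hg hfg⟩
end

section
/- Let n ≥ 2 and f = 𝟙_E be the indicator of the box E = {1,...,2N}^{n−1} × {1,...,nN²}. Then ‖f‖_{ℓ^p(ℤ^n)} ≃ N^{(n+1)/p} and ‖A_N^ℙ f‖_{ℓ^{p'}(ℤ^n)} ≳ N^{(n+1)/p'}; consequently ‖A_N^ℙ f‖_{ℓ^{p'}} / ‖f‖_{ℓ^p} ≳ N^{-(n+1)(2/p − 1)}. -/
/-!
Every shift `x + (k, |k|²)`, `k ∈ {1,…,N}ᵐ`, of a point `x` of the small box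
`{1,…,N}ᵐ × {1,…,N²}` lies in `E = {1,…,2N}ᵐ × {1,…,(m+1)N²}`, so `A_N 𝟙_E = 1` on the small box
and `‖A_N 𝟙_E‖_{p'} ≥ (N^{m+2})^{1/p'}`, while `‖𝟙_E‖_p = |E|^{1/p} = (2ᵐ(m+1))^{1/p} N^{(m+2)/p}`.
The last claim multiplies these: `N^{-(m+2)(2/p-1)} · N^{(m+2)/p} = N^{(m+2)/p'}`.
-/

open MeasureTheory ENNReal

/-- Averaging operator along the discrete paraboloid in ℤⁿ with n = m+1. -/
noncomputable def parAvg (m N : ℕ) (f : (Fin (m + 1) → ℤ) → ℂ)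
    (x : Fin (m + 1) → ℤ) : ℂ :=
  (1 / (N : ℂ) ^ m) * ∑ k ∈ Fintype.piFinset (fun _ : Fin m => Finset.Icc (1 : ℤ) (N : ℤ)),
    f (fun i => if h : i = Fin.last m then x i + ∑ j, (k j) ^ 2
                else x i + k (i.castPred h))

/-- Indicator of the box {1,...,2N}^{n−1} × {1,...,nN²} ⊂ ℤⁿ, n = m+1. -/
noncomputable def boxInd (m N : ℕ) (x : Fin (m + 1) → ℤ) : ℂ :=
  if (∀ i : Fin m, 1 ≤ x i.castSucc ∧ x i.castSucc ≤ 2 * (N : ℤ)) ∧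
      1 ≤ x (Fin.last m) ∧ x (Fin.last m) ≤ ((m + 1) : ℤ) * (N : ℤ) ^ 2
  then 1 else 0

/-- The box `{1,…,a}ᵐ × {1,…,b} ⊂ ℤᵐ⁺¹`. -/
noncomputable def intBox (m a b : ℕ) : Finset (Fin (m + 1) → ℤ) :=
  Fintype.piFinset (Fin.lastCases (motive := fun _ => Finset ℤ) (Finset.Icc 1 (b : ℤ))
    fun _ => Finset.Icc 1 (a : ℤ))

theorem mem_intBox {m a b : ℕ} {x : Fin (m + 1) → ℤ} :
    x ∈ intBox m a b ↔ (∀ i : Fin m, x i.castSucc ∈ Finset.Icc 1 (a : ℤ)) ∧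
      x (Fin.last m) ∈ Finset.Icc 1 (b : ℤ) := by
  simp only [intBox, Fintype.mem_piFinset, Fin.forall_fin_succ', Fin.lastCases_castSucc,
    Fin.lastCases_last]

theorem card_intBox (m a b : ℕ) : (intBox m a b).card = a ^ m * b := by
  simp [intBox, Fintype.card_piFinset, Fin.prod_univ_castSucc]

/-- `parAvg m N f x` is definitionally `N⁻ᵐ ∑_{k ∈ {1,…,N}ᵐ} f (paraShift x k)`. -/
def paraShift {m : ℕ} (x : Fin (m + 1) → ℤ) (k : Fin m → ℤ) : Fin (m + 1) → ℤ :=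
  fun i => if h : i = Fin.last m then x i + ∑ j, (k j) ^ 2 else x i + k (i.castPred h)

@[simp] theorem paraShift_castSucc {m : ℕ} (x : Fin (m + 1) → ℤ) (k : Fin m → ℤ) (i : Fin m) :
    paraShift x k i.castSucc = x i.castSucc + k i := by
  simp [paraShift, (Fin.castSucc_lt_last i).ne]

@[simp] theorem paraShift_last {m : ℕ} (x : Fin (m + 1) → ℤ) (k : Fin m → ℤ) :
    paraShift x k (Fin.last m) = x (Fin.last m) + ∑ j, k j ^ 2 := by
  simp [paraShift]

theorem paraShift_mem_intBox {m a b N : ℕ} {x : Fin (m + 1) → ℤ} (hx : x ∈ intBox m a b)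
    {k : Fin m → ℤ} (hk : k ∈ Fintype.piFinset fun _ => Finset.Icc 1 (N : ℤ)) :
    paraShift x k ∈ intBox m (a + N) (b + m * N ^ 2) := by
  simp only [Fintype.mem_piFinset, Finset.mem_Icc] at hk
  simp only [mem_intBox, Finset.mem_Icc] at hx ⊢
  have hsq : ∀ j, k j ^ 2 ≤ (N : ℤ) ^ 2 := fun j =>
    pow_le_pow_left₀ (by linarith [hk j]) (hk j).2 2
  have hsum : ∑ j, k j ^ 2 ≤ m * (N : ℤ) ^ 2 := by
    simpa using Finset.sum_le_sum fun j (_ : j ∈ Finset.univ) => hsq j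
  have hsum_nonneg : 0 ≤ ∑ j, k j ^ 2 := Finset.sum_nonneg fun j _ => sq_nonneg (k j)
  refine ⟨fun i => ?_, ?_⟩ <;> simp only [paraShift_castSucc, paraShift_last] <;> push_cast
  · constructor <;> linarith [hx.1 i, hk i]
  · constructor <;> linarith [hx.2]

theorem parAvg_eq_one_of_forall {m N : ℕ} (hN : N ≠ 0) {f : (Fin (m + 1) → ℤ) → ℂ}
    {x : Fin (m + 1) → ℤ}
    (h : ∀ k ∈ Fintype.piFinset (fun _ : Fin m => Finset.Icc 1 (N : ℤ)), f (paraShift x k) = 1) :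
    parAvg m N f x = 1 := by
  change (1 / (N : ℂ) ^ m) * ∑ k ∈ _, f (paraShift x k) = 1
  simp [Finset.sum_congr rfl h, hN]

theorem boxInd_eq_indicator (m N : ℕ) :
    boxInd m N = (intBox m (2 * N) ((m + 1) * N ^ 2) : Set (Fin (m + 1) → ℤ)).indicator 1 := by
  ext x
  simp only [boxInd, Set.indicator, Finset.mem_coe, mem_intBox, Finset.mem_Icc, Pi.one_apply]
  push_cast
  rfl

theorem eLpNorm_boxInd (m N : ℕ) {p : ℝ} (hp : 0 < p) :
    eLpNorm (boxInd m N) (ENNReal.ofReal p) Measure.count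
      = ((2 ^ m * (m + 1) : ℕ) : ℝ≥0∞) ^ (1 / p) * (N : ℝ≥0∞) ^ (((m : ℝ) + 2) / p) := by
  rw [boxInd_eq_indicator, Pi.one_def, eLpNorm_indicator_const (Finset.measurableSet _)
    (by simpa using hp) ofReal_ne_top, Measure.count_apply_finset, card_intBox, toReal_ofReal hp.le]
  have hcard : (((2 * N) ^ m * ((m + 1) * N ^ 2) : ℕ) : ℝ≥0∞)
      = ((2 ^ m * (m + 1) : ℕ) : ℝ≥0∞) * (N : ℝ≥0∞) ^ (m + 2) := by
    push_cast; ring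
  rw [hcard, mul_rpow_of_nonneg _ _ (by positivity), ← rpow_natCast, ← rpow_mul]
  simp only [enorm_one, one_mul]
  congr 2
  push_cast
  ring

theorem le_eLpNorm_parAvg_boxInd (m : ℕ) {N : ℕ} (hN : N ≠ 0) {q : ℝ} (hq : 0 < q) :
    (N : ℝ≥0∞) ^ (((m : ℝ) + 2) / q)
      ≤ eLpNorm (parAvg m N (boxInd m N)) (ENNReal.ofReal q) Measure.count := by
  have hsmall : eLpNorm ((intBox m N (N ^ 2) : Set (Fin (m + 1) → ℤ)).indicator fun _ => (1 : ℂ))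
      (ENNReal.ofReal q) Measure.count = (N : ℝ≥0∞) ^ (((m : ℝ) + 2) / q) := by
    rw [eLpNorm_indicator_const (Finset.measurableSet _) (by simpa using hq) ofReal_ne_top,
      Measure.count_apply_finset, card_intBox, toReal_ofReal hq.le, enorm_one, one_mul,
      ← pow_add, Nat.cast_pow, ← rpow_natCast, ← rpow_mul]
    congr 1
    push_cast
    ring
  rw [← hsmall]
  refine eLpNorm_mono_enorm fun x => ?_
  by_cases hx : x ∈ intBox m N (N ^ 2)
  · have hshift : ∀ k ∈ Fintype.piFinset (fun _ : Fin m => Finset.Icc 1 (N : ℤ)),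
        boxInd m N (paraShift x k) = 1 := fun k hk => by
      have hmem : paraShift x k ∈ intBox m (2 * N) ((m + 1) * N ^ 2) := by
        convert paraShift_mem_intBox hx hk using 2 <;> ring
      rw [boxInd_eq_indicator, Set.indicator_of_mem (Finset.mem_coe.2 hmem)]
      rfl
    simp [hx, parAvg_eq_one_of_forall hN hshift]
  · simp [hx]

theorem parAvg_sharpness_box_general (m : ℕ) (p : ℝ) (hp : 1 < p) :
    ∃ c C c' c'' : ℝ≥0∞, 0 < c ∧ C < ∞ ∧ 0 < c' ∧ 0 < c'' ∧
      ∀ N : ℕ, 1 ≤ N →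
        (c * (N : ℝ≥0∞) ^ (((m : ℝ) + 2) / p)
            ≤ eLpNorm (boxInd m N) (ENNReal.ofReal p) Measure.count ∧
          eLpNorm (boxInd m N) (ENNReal.ofReal p) Measure.count
            ≤ C * (N : ℝ≥0∞) ^ (((m : ℝ) + 2) / p)) ∧
        c' * (N : ℝ≥0∞) ^ (((m : ℝ) + 2) / (p / (p - 1)))
            ≤ eLpNorm (parAvg m N (boxInd m N)) (ENNReal.ofReal (p / (p - 1)))
                Measure.count ∧
        c'' * (N : ℝ≥0∞) ^ (-((m : ℝ) + 2) * (2 / p - 1))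
              * eLpNorm (boxInd m N) (ENNReal.ofReal p) Measure.count
            ≤ eLpNorm (parAvg m N (boxInd m N)) (ENNReal.ofReal (p / (p - 1)))
                Measure.count := by
  have hp0 : 0 < p := by linarith
  have hp' : 0 < p / (p - 1) := div_pos hp0 (by linarith)
  set C : ℝ≥0∞ := ((2 ^ m * (m + 1) : ℕ) : ℝ≥0∞) ^ (1 / p)
  have hC0 : C ≠ 0 := (rpow_pos (by positivity) (natCast_ne_top _)).ne'
  have hCtop : C ≠ ∞ := rpow_ne_top_of_nonneg (by positivity) (natCast_ne_top _)
  refine ⟨C, C, 1, C⁻¹, pos_iff_ne_zero.2 hC0, lt_top_iff_ne_top.2 hCtop, one_pos,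
    ENNReal.inv_pos.2 hCtop, fun N hN => ?_⟩
  have hN0 : N ≠ 0 := by omega
  rw [eLpNorm_boxInd m N hp0]
  refine ⟨⟨le_rfl, le_rfl⟩, by simpa using le_eLpNorm_parAvg_boxInd m hN0 hp', ?_⟩
  calc C⁻¹ * (N : ℝ≥0∞) ^ (-((m : ℝ) + 2) * (2 / p - 1)) * (C * (N : ℝ≥0∞) ^ (((m : ℝ) + 2) / p))
      = (N : ℝ≥0∞) ^ (((m : ℝ) + 2) / (p / (p - 1))) := by
        rw [mul_mul_mul_comm, ENNReal.inv_mul_cancel hC0 hCtop, one_mul,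
          ← rpow_add _ _ (by exact_mod_cast hN0) (natCast_ne_top N)]
        congr 1
        field_simp
        ring
    _ ≤ _ := le_eLpNorm_parAvg_boxInd m hN0 hp'

/-- Sharpness example: with f = 𝟙_{{1,…,2N}^{n−1} × {1,…,nN²}} one has
‖f‖_{ℓ^p} ≃ N^{(n+1)/p}, ‖A_N^ℙ f‖_{ℓ^{p'}} ≳ N^{(n+1)/p'}, and hence
‖A_N^ℙ f‖_{ℓ^{p'}} ≳ N^{−(n+1)(2/p−1)} ‖f‖_{ℓ^p}, where n = m+1, p' = p/(p−1). -/
theorem parAvg_sharpness_box (m : ℕ) (hm : 1 ≤ m) (p : ℝ) (hp : 1 < p) :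
    ∃ c C c' c'' : ℝ≥0∞, 0 < c ∧ C < ∞ ∧ 0 < c' ∧ 0 < c'' ∧
      ∀ N : ℕ, 1 ≤ N →
        (c * (N : ℝ≥0∞) ^ (((m : ℝ) + 2) / p)
            ≤ eLpNorm (boxInd m N) (ENNReal.ofReal p) Measure.count ∧
          eLpNorm (boxInd m N) (ENNReal.ofReal p) Measure.count
            ≤ C * (N : ℝ≥0∞) ^ (((m : ℝ) + 2) / p)) ∧
        c' * (N : ℝ≥0∞) ^ (((m : ℝ) + 2) / (p / (p - 1)))
            ≤ eLpNorm (parAvg m N (boxInd m N)) (ENNReal.ofReal (p / (p - 1)))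
                Measure.count ∧
        c'' * (N : ℝ≥0∞) ^ (-((m : ℝ) + 2) * (2 / p - 1))
              * eLpNorm (boxInd m N) (ENNReal.ofReal p) Measure.count
            ≤ eLpNorm (parAvg m N (boxInd m N)) (ENNReal.ofReal (p / (p - 1)))
                Measure.count :=
  parAvg_sharpness_box_general m p hp
end

section
/- Let n ≥ 2 and f = δ_0 (the Dirac delta at the origin of ℤ^n). Then ‖A_N^ℙ f‖_{ℓ^{p'}(ℤ^n)} ≥ N^{-(n−1)/p}, and hence the estimate ‖A_N^ℙ f‖_{ℓ^{p'}(ℤ^n)} ≲ N^{-(n+1)(2/p−1)} ‖f‖_{ℓ^p(ℤ^n)} (uniformly in N) forces p ≥ (n+3)/(n+1). -/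
/-!
The operator `A_N` sends `δ₀` to a function of size `N^{-(n-1)}` at each of the `N^{n-1}` points
`(-k, -|k|²)`, `k ∈ [1, N]^{n-1}`, of the reflected paraboloid; summing over these alone gives
`‖A_N δ₀‖_{p'} ≥ N^{-(n-1)} · N^{(n-1)/p'} = N^{-(n-1)/p}`. Since `‖δ₀‖_p = 1`, a uniform bound
`‖A_N δ₀‖_{p'} ≲ N^{-(n+1)(2/p-1)}` forces `-(n-1)/p ≤ -(n+1)(2/p-1)`, i.e. `p ≥ (n+3)/(n+1)`.
-/

open MeasureTheory ENNReal NNReal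

/-- Dirac delta at the origin of ℤⁿ, n = m+1. -/
noncomputable def dirac0 (m : ℕ) (x : Fin (m + 1) → ℤ) : ℂ :=
  if x = 0 then 1 else 0

open Finset

theorem mul_card_rpow_le_eLpNorm_count {α ε : Type*} [MeasurableSpace α]
    [MeasurableSingletonClass α] [TopologicalSpace ε] [ContinuousENorm ε] {g : α → ε}
    {q : ℝ≥0∞} (hq0 : q ≠ 0) (hq : q ≠ ∞) {s : Finset α} {a : ℝ≥0∞}
    (ha : ∀ x ∈ s, a ≤ ‖g x‖ₑ) :
    a * (#s : ℝ≥0∞) ^ (1 / q.toReal) ≤ eLpNorm g q Measure.count := by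
  have hind : eLpNorm ((s : Set α).indicator fun _ => a) q Measure.count
      = a * (#s : ℝ≥0∞) ^ (1 / q.toReal) := by
    rw [eLpNorm_indicator_const s.measurableSet hq0 hq, enorm_eq_self,
      Measure.count_apply_finset]
  refine hind ▸ eLpNorm_mono_enorm fun x => ?_
  by_cases hx : x ∈ s
  · simpa [hx] using ha x hx
  · simp [hx]

theorem le_of_forall_natCast_rpow_le_mul_rpow {a b : ℝ} {C : ℝ≥0∞} (hC : C ≠ ∞)
    (h : ∀ N : ℕ, 1 ≤ N → (N : ℝ≥0∞) ^ a ≤ C * (N : ℝ≥0∞) ^ b) : a ≤ b := by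
  by_contra! hba
  have hε : 0 < a - b := sub_pos.2 hba
  have hinv : 0 ≤ 1 / (a - b) := by positivity
  obtain ⟨N, hN⟩ := ENNReal.exists_nat_gt (rpow_ne_top_of_nonneg hinv hC)
  have hN0 : (N : ℝ≥0∞) ≠ 0 := (pos_of_gt hN).ne'
  have hpow : (N : ℝ≥0∞) ^ (a - b) ≤ C := by
    have hNb0 : (N : ℝ≥0∞) ^ b ≠ 0 := (rpow_pos (pos_iff_ne_zero.2 hN0) (natCast_ne_top N)).ne'
    have hNbtop : (N : ℝ≥0∞) ^ b ≠ ∞ := rpow_ne_top_of_ne_zero hN0 (natCast_ne_top N)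
    rw [← ENNReal.mul_le_mul_iff_left hNb0 hNbtop, ← rpow_add _ _ hN0 (natCast_ne_top N),
      sub_add_cancel]
    exact h N (Nat.one_le_iff_ne_zero.2 (by exact_mod_cast hN0))
  have := rpow_le_rpow hpow hinv
  rw [← ENNReal.rpow_mul, mul_one_div_cancel hε.ne', ENNReal.rpow_one] at this
  exact (this.trans_lt hN).false

def paraboloidPoint (m : ℕ) (k : Fin m → ℤ) : Fin (m + 1) → ℤ :=
  fun i => if h : i = Fin.last m then -∑ j, k j ^ 2 else -k (i.castPred h)

theorem paraboloidPoint_injective (m : ℕ) : Function.Injective (paraboloidPoint m) := by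
  intro k k' hkk'
  funext j
  have hj := congrFun hkk' j.castSucc
  simp only [paraboloidPoint, dif_neg (Fin.castSucc_lt_last j).ne, Fin.castPred_castSucc] at hj
  omega

theorem paraboloidPoint_add_eq_zero_iff {m : ℕ} {k k' : Fin m → ℤ} :
    (fun i => if h : i = Fin.last m then paraboloidPoint m k i + ∑ j, k' j ^ 2
      else paraboloidPoint m k i + k' (i.castPred h)) = 0 ↔ k' = k := by
  constructor
  · intro h0
    funext j
    have hj := congrFun h0 j.castSucc
    simp only [paraboloidPoint, dif_neg (Fin.castSucc_lt_last j).ne, Fin.castPred_castSucc,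
      Pi.zero_apply] at hj
    omega
  · rintro rfl
    funext i
    by_cases h : i = Fin.last m <;> simp [paraboloidPoint, h]

theorem parAvg_dirac0_paraboloidPoint {m N : ℕ} {k : Fin m → ℤ}
    (hk : k ∈ Fintype.piFinset fun _ : Fin m => Icc (1 : ℤ) N) :
    parAvg m N (dirac0 m) (paraboloidPoint m k) = 1 / (N : ℂ) ^ m := by
  simp only [parAvg, dirac0, paraboloidPoint_add_eq_zero_iff, sum_ite_eq', if_pos hk, mul_one]

theorem eLpNorm_dirac0 (m : ℕ) {p : ℝ≥0∞} (hp : p ≠ 0) :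
    eLpNorm (dirac0 m) p Measure.count = 1 := by
  have hdirac : dirac0 m = ({0} : Set (Fin (m + 1) → ℤ)).indicator fun _ => 1 := by
    funext x
    simp [dirac0, Set.indicator]
  rw [hdirac, eLpNorm_indicator_const' (measurableSet_singleton 0) (by simp) hp]
  simp

theorem rpow_neg_div_le_eLpNorm_parAvg_dirac0 (m : ℕ) {p : ℝ} (hp : 1 < p) {N : ℕ} (hN : 1 ≤ N) :
    (N : ℝ≥0∞) ^ (-(m : ℝ) / p)
      ≤ eLpNorm (parAvg m N (dirac0 m)) (ENNReal.ofReal (p / (p - 1))) Measure.count := by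
  set box := Fintype.piFinset fun _ : Fin m => Icc (1 : ℤ) N
  have hN0 : (N : ℝ≥0∞) ≠ 0 := by positivity
  have hr : 0 < p / (p - 1) := div_pos (by linarith) (by linarith)
  have hcard : #(box.image (paraboloidPoint m)) = N ^ m := by
    simp [box, card_image_of_injective _ (paraboloidPoint_injective m), Fintype.card_piFinset]
  have hval : ∀ x ∈ box.image (paraboloidPoint m),
      ((N : ℝ≥0∞) ^ m)⁻¹ ≤ ‖parAvg m N (dirac0 m) x‖ₑ := by
    simp only [mem_image, forall_exists_index, and_imp, forall_apply_eq_imp_iff₂]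
    intro k hk
    rw [parAvg_dirac0_paraboloidPoint hk, one_div,
      enorm_inv (pow_ne_zero _ (Nat.cast_ne_zero.2 (by omega))), enorm_pow]
    simp [enorm_eq_nnnorm]
  calc (N : ℝ≥0∞) ^ (-(m : ℝ) / p)
      = ((N : ℝ≥0∞) ^ m)⁻¹
          * ((N ^ m : ℕ) : ℝ≥0∞) ^ (1 / (ENNReal.ofReal (p / (p - 1))).toReal) := by
        rw [toReal_ofReal hr.le, Nat.cast_pow, ← ENNReal.rpow_natCast, ← ENNReal.rpow_neg,
          ← ENNReal.rpow_mul, ← rpow_add _ _ hN0 (natCast_ne_top N)]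
        congr 1
        field_simp
        ring
    _ ≤ _ := hcard ▸ mul_card_rpow_le_eLpNorm_count (by simpa using hr) ofReal_ne_top hval

theorem parAvg_delta_necessity_general (m : ℕ) (p : ℝ) (hp : 1 < p) :
    (∀ N : ℕ, 1 ≤ N →
      (N : ℝ≥0∞) ^ (-(m : ℝ) / p)
        ≤ eLpNorm (parAvg m N (dirac0 m)) (ENNReal.ofReal (p / (p - 1)))
            Measure.count) ∧
    ((∃ C : ℝ≥0, ∀ N : ℕ, 1 ≤ N →
        eLpNorm (parAvg m N (dirac0 m)) (ENNReal.ofReal (p / (p - 1))) Measure.count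
          ≤ C * (N : ℝ≥0∞) ^ (-((m : ℝ) + 2) * (2 / p - 1))
              * eLpNorm (dirac0 m) (ENNReal.ofReal p) Measure.count) →
      ((m : ℝ) + 4) / ((m : ℝ) + 2) ≤ p) := by
  have hp0 : 0 < p := by linarith
  refine ⟨fun N hN => rpow_neg_div_le_eLpNorm_parAvg_dirac0 m hp hN, ?_⟩
  rintro ⟨C, hC⟩
  have hexp : -(m : ℝ) / p ≤ -((m : ℝ) + 2) * (2 / p - 1) :=
    le_of_forall_natCast_rpow_le_mul_rpow coe_ne_top fun N hN => by
      simpa [eLpNorm_dirac0 m (ofReal_pos.2 hp0).ne'] using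
        (rpow_neg_div_le_eLpNorm_parAvg_dirac0 m hp hN).trans (hC N hN)
  have hexp_mul := mul_le_mul_of_nonneg_left hexp hp0.le
  field_simp at hexp_mul
  rw [div_le_iff₀ (by positivity)]
  linarith

/-- With f = δ₀ one has ‖A_N^ℙ δ₀‖_{ℓ^{p'}} ≥ N^{−(n−1)/p}, and the uniform
estimate ‖A_N^ℙ δ₀‖_{ℓ^{p'}} ≤ C N^{−(n+1)(2/p−1)} ‖δ₀‖_{ℓ^p} forces
p ≥ (n+3)/(n+1).  Here n = m+1 and p' = p/(p−1). -/
theorem parAvg_delta_necessity (m : ℕ) (hm : 1 ≤ m) (p : ℝ) (hp : 1 < p) :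
    (∀ N : ℕ, 1 ≤ N →
      (N : ℝ≥0∞) ^ (-(m : ℝ) / p)
        ≤ eLpNorm (parAvg m N (dirac0 m)) (ENNReal.ofReal (p / (p - 1)))
            Measure.count) ∧
    ((∃ C : ℝ≥0, ∀ N : ℕ, 1 ≤ N →
        eLpNorm (parAvg m N (dirac0 m)) (ENNReal.ofReal (p / (p - 1))) Measure.count
          ≤ C * (N : ℝ≥0∞) ^ (-((m : ℝ) + 2) * (2 / p - 1))
              * eLpNorm (dirac0 m) (ENNReal.ofReal p) Measure.count) →
      ((m : ℝ) + 4) / ((m : ℝ) + 2) ≤ p) :=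
  parAvg_delta_necessity_general m p hp
end
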